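/- Let N ≥ 1 be an integer, let 1 ≤ q < 2, let Ω ⊆ ℝ^N be an open set, and let w be a classical Lane–Emden solution on Ω. Then for every δ > 0 and every smooth function φ : ℝ^N → ℝ with compact support contained in Ω, one has (1/δ)·(1 − 1/δ)·∫_Ω |∇w(x)/w(x)|² φ(x)² dx + (1/δ)·∫_Ω φ(x)²/w(x)^{2−q} dx ≤ ∫_Ω |∇φ(x)|² dx. -/

import Mathlib

/-!
Picone's trick. Testing the equation `-Δw = w^(q-1)` against `φ²/w` (Green's first identity)
gives `∫ φ²/w^(2-q) = ∫ 2 (φ/w) ⟪∇φ, ∇w⟫ - (|∇w|/w)² φ²`. With `t = 1/δ` the left-hand side of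
the inequality is then `∫ 2t (φ/w) ⟪∇φ, ∇w⟫ - t² (|∇w|/w)² φ²`, and this integrand is bounded
by `|∇φ|²` because `|∇φ - t (φ/w) ∇w|² ≥ 0`.
-/

open MeasureTheory

/-- The Laplacian of a function on `ℝ^N`, computed as the sum of the second
partial derivatives along the coordinate directions. -/
noncomputable def lap {N : ℕ} (f : EuclideanSpace ℝ (Fin N) → ℝ)
    (x : EuclideanSpace ℝ (Fin N)) : ℝ :=
  ∑ i : Fin N, fderiv ℝ (fun y => fderiv ℝ f y (EuclideanSpace.single i 1)) x
    (EuclideanSpace.single i 1)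

/-- A classical Lane–Emden solution on an open set `Ω ⊆ ℝ^N`: twice continuously
differentiable on `Ω`, positive on `Ω`, and satisfying `-Δw = w^(q-1)` on `Ω`. -/
def IsLaneEmdenSolution {N : ℕ} (q : ℝ) (Ω : Set (EuclideanSpace ℝ (Fin N)))
    (w : EuclideanSpace ℝ (Fin N) → ℝ) : Prop :=
  ContDiffOn ℝ 2 w Ω ∧ (∀ x ∈ Ω, 0 < w x) ∧ ∀ x ∈ Ω, -lap w x = w x ^ (q - 1)

open Set Function
open scoped RealInnerProductSpace

theorem ContDiffOn.contDiff_of_tsupport_subset {𝕜 E F : Type*} [NontriviallyNormedField 𝕜]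
    [NormedAddCommGroup E] [NormedSpace 𝕜 E] [NormedAddCommGroup F] [NormedSpace 𝕜 F]
    {n : WithTop ℕ∞} {f : E → F} {s : Set E} (hf : ContDiffOn 𝕜 n f s) (hs : IsOpen s)
    (hfs : tsupport f ⊆ s) : ContDiff 𝕜 n f := by
  refine contDiff_iff_contDiffAt.2 fun x => ?_
  by_cases hx : x ∈ s
  · exact hf.contDiffAt (hs.mem_nhds hx)
  · exact contDiffAt_const.congr_of_eventuallyEq
      (notMem_tsupport_iff_eventuallyEq.1 fun h => hx (hfs h))

theorem ContDiff.integrable_fderiv_apply_of_hasCompactSupport {E F : Type*}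
    [NormedAddCommGroup E] [NormedSpace ℝ E] [NormedAddCommGroup F] [NormedSpace ℝ F]
    [MeasurableSpace E] [OpensMeasurableSpace E] (μ : Measure E) [IsFiniteMeasureOnCompacts μ]
    {u : E → F} (hu : ContDiff ℝ 1 u) (hc : HasCompactSupport u) (v : E) :
    Integrable (fun x => fderiv ℝ u x v) μ :=
  ((hu.continuous_fderiv one_ne_zero).clm_apply continuous_const).integrable_of_hasCompactSupport
    (hc.fderiv_apply ℝ v)

theorem integral_fderiv_apply_eq_zero_of_hasCompactSupport {E : Type*} [NormedAddCommGroup E]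
    [NormedSpace ℝ E] [FiniteDimensional ℝ E] [MeasurableSpace E] [BorelSpace E] (μ : Measure E)
    [μ.IsAddHaarMeasure] {u : E → ℝ} (hu : ContDiff ℝ 1 u) (hc : HasCompactSupport u) (v : E) :
    ∫ x, fderiv ℝ u x v ∂μ = 0 := by
  simpa using integral_mul_fderiv_eq_neg_fderiv_mul_of_integrable (μ := μ) (f := fun _ => (1 : ℝ))
    (g := u) (v := v) (by simp)
    (by simpa using hu.integrable_fderiv_apply_of_hasCompactSupport μ hc v)
    (by simpa using hu.continuous.integrable_of_hasCompactSupport hc)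
    (fun x _ => differentiableAt_const _) (fun x _ => hu.differentiable one_ne_zero x)

theorem ContDiffOn.continuousOn_gradient {F : Type*} [NormedAddCommGroup F]
    [InnerProductSpace ℝ F] [CompleteSpace F] {n : WithTop ℕ∞} {f : F → ℝ} {s : Set F}
    (hf : ContDiffOn ℝ n f s) (hs : IsOpen s) (hn : 1 ≤ n) : ContinuousOn (gradient f) s :=
  (InnerProductSpace.toDual ℝ F).symm.continuous.comp_continuousOn
    (hf.continuousOn_fderiv_of_isOpen hs hn)

theorem ContinuousOn.integrableOn_of_support_subset_isCompact {X E : Type*}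
    [TopologicalSpace X] [T2Space X] [MeasurableSpace X] [OpensMeasurableSpace X]
    [NormedAddCommGroup E] {μ : Measure X} [IsLocallyFiniteMeasure μ] {f : X → E} {s K : Set X}
    (hs : MeasurableSet s) (hf : ContinuousOn f s) (hK : IsCompact K) (hKs : K ⊆ s)
    (hfK : support f ⊆ K) : IntegrableOn f s μ :=
  ((hf.mono hKs).integrableOn_compact hK).of_forall_sdiff_eq_zero hs
    fun _ hx => notMem_support.1 fun h => hx.2 (hfK h)

theorem div_mul_rpow_sub_one {a : ℝ} (ha : 0 < a) (b q : ℝ) :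
    b / a * a ^ (q - 1) = b / a ^ (2 - q) := by
  rw [div_mul_eq_mul_div, div_eq_div_iff ha.ne' (Real.rpow_pos_of_pos ha _).ne', mul_assoc,
    ← Real.rpow_add ha, show q - 1 + (2 - q) = 1 by ring, Real.rpow_one]

theorem two_mul_mul_inner_sub_le_norm_sq {F : Type*} [NormedAddCommGroup F]
    [InnerProductSpace ℝ F] (s : ℝ) (a b : F) :
    2 * s * ⟪a, b⟫ - s ^ 2 * ‖b‖ ^ 2 ≤ ‖a‖ ^ 2 := by
  have h := sq_nonneg ‖a - s • b‖
  rw [norm_sub_sq_real, real_inner_smul_right, norm_smul, mul_pow, Real.norm_eq_abs, sq_abs] at h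
  linarith

theorem inner_gradient_sq_div {F : Type*} [NormedAddCommGroup F]
    [InnerProductSpace ℝ F] [CompleteSpace F] {φ w : F → ℝ} {x : F}
    (hφ : DifferentiableAt ℝ φ x) (hw : DifferentiableAt ℝ w x) (hwx : w x ≠ 0) :
    ⟪gradient (fun y => φ y ^ 2 / w y) x, gradient w x⟫
      = 2 * (φ x / w x * ⟪gradient φ x, gradient w x⟫) - (‖gradient w x‖ / w x) ^ 2 * φ x ^ 2 := by
  have h : HasFDerivAt (fun y => φ y ^ 2 / w y)
      ((2 * φ x / w x) • fderiv ℝ φ x - (φ x ^ 2 / w x ^ 2) • fderiv ℝ w x) x := by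
    rw [show (fun y => φ y ^ 2 / w y) = (fun y => φ y ^ 2) * (fun y => y⁻¹) ∘ w from
      funext fun y => div_eq_mul_inv _ _]
    refine ((hφ.hasFDerivAt.pow 2).mul
      ((hasDerivAt_inv hwx).comp_hasFDerivAt x hw.hasFDerivAt)).congr_fderiv ?_
    ext v
    simp only [neg_smul, smul_neg, comp_apply, Nat.add_one_sub_one, pow_one, nsmul_eq_mul,
      Nat.cast_ofNat, add_apply, neg_apply, smul_apply, smul_eq_mul, sub_apply]
    field_simp
    ring
  rw [inner_gradient_left, h.fderiv]
  simp only [sub_apply, smul_apply, smul_eq_mul,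
    ← inner_gradient_left, real_inner_self_eq_norm_sq]
  field_simp

section Euclidean

variable {N : ℕ}

local notation "𝔼" => EuclideanSpace ℝ (Fin N)

theorem sum_fderiv_mul_fderiv_eq_inner_gradient (f g : 𝔼 → ℝ) (x : 𝔼) :
    ∑ i, fderiv ℝ f x (EuclideanSpace.single i 1) * fderiv ℝ g x (EuclideanSpace.single i 1)
      = ⟪gradient f x, gradient g x⟫ := by
  simp only [← inner_gradient_left, ← EuclideanSpace.basisFun_apply,
    real_inner_comm _ (gradient g x)]
  exact (EuclideanSpace.basisFun (Fin N) ℝ).sum_inner_mul_inner _ _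

theorem sum_fderiv_mul_fderiv_single_eq_mul_lap_add_inner {c w : 𝔼 → ℝ} {x : 𝔼}
    (hc : DifferentiableAt ℝ c x)
    (hw : ∀ i, DifferentiableAt ℝ (fun y => fderiv ℝ w y (EuclideanSpace.single i 1)) x) :
    ∑ i, fderiv ℝ (fun y => c y * fderiv ℝ w y (EuclideanSpace.single i 1)) x
        (EuclideanSpace.single i 1)
      = c x * lap w x + ⟪gradient c x, gradient w x⟫ := by
  simp only [fderiv_fun_mul hc (hw _), add_apply, smul_apply, smul_eq_mul,
    Finset.sum_add_distrib, lap, Finset.mul_sum, ← sum_fderiv_mul_fderiv_eq_inner_gradient]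
  simp only [mul_comm]

theorem integral_mul_lap_eq_neg_integral_inner_gradient {Ω : Set 𝔼} (hΩ : IsOpen Ω)
    {c w : 𝔼 → ℝ} (hc : ContDiffOn ℝ 1 c Ω) (hcc : HasCompactSupport c) (hcΩ : tsupport c ⊆ Ω)
    (hw : ContDiffOn ℝ 2 w Ω) :
    ∫ x in Ω, c x * lap w x = -∫ x in Ω, ⟪gradient c x, gradient w x⟫ := by
  set u : Fin N → 𝔼 → ℝ := fun i y => c y * fderiv ℝ w y (EuclideanSpace.single i 1)
  have hpartial : ∀ i, ContDiffOn ℝ 1 (fun y => fderiv ℝ w y (EuclideanSpace.single i 1)) Ω :=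
    fun i => (hw.fderiv_of_isOpen hΩ (m := 1) le_rfl).clm_apply contDiffOn_const
  have hu : ∀ i, ContDiff ℝ 1 (u i) := fun i =>
    (hc.mul (hpartial i)).contDiff_of_tsupport_subset hΩ (tsupport_mul_subset_left.trans hcΩ)
  -- the divergence of the compactly supported `C¹` vector field `c ∇w`
  set div : 𝔼 → ℝ := fun x => ∑ i, fderiv ℝ (u i) x (EuclideanSpace.single i 1)
  have hdiv_int : Integrable div := integrable_finsetSum _ fun i _ =>
    (hu i).integrable_fderiv_apply_of_hasCompactSupport volume hcc.mul_right _
  have hdiv_zero : ∫ x, div x = 0 := by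
    rw [integral_finsetSum _ fun i _ =>
      (hu i).integrable_fderiv_apply_of_hasCompactSupport volume hcc.mul_right _]
    exact Finset.sum_eq_zero fun i _ =>
      integral_fderiv_apply_eq_zero_of_hasCompactSupport volume (hu i) hcc.mul_right _
  have hdiv_Ω : ∫ x in Ω, div x = ∫ x, div x :=
    setIntegral_eq_integral_of_forall_compl_eq_zero fun x hx => Finset.sum_eq_zero fun i _ => by
      rw [fderiv_of_notMem_tsupport ℝ fun h => hx (hcΩ (tsupport_mul_subset_left h))]
      rfl
  have hdiv_eq : ∀ x ∈ Ω, div x = c x * lap w x + ⟪gradient c x, gradient w x⟫ := fun x hx =>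
    sum_fderiv_mul_fderiv_single_eq_mul_lap_add_inner
      ((hc.differentiableOn one_ne_zero).differentiableAt (hΩ.mem_nhds hx))
      fun i => ((hpartial i).differentiableOn one_ne_zero).differentiableAt (hΩ.mem_nhds hx)
  have hinner_int : IntegrableOn (fun x => ⟪gradient c x, gradient w x⟫) Ω := by
    refine ContinuousOn.integrableOn_of_support_subset_isCompact hΩ.measurableSet
      ((hc.continuousOn_gradient hΩ le_rfl).inner (hw.continuousOn_gradient hΩ one_le_two))
      hcc hcΩ fun x hx => ?_
    by_contra h
    exact hx (by simp [gradient, fderiv_of_notMem_tsupport ℝ h])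
  calc ∫ x in Ω, c x * lap w x = ∫ x in Ω, (div x - ⟪gradient c x, gradient w x⟫) :=
        setIntegral_congr_fun hΩ.measurableSet fun x hx => by rw [hdiv_eq x hx]; ring
    _ = -∫ x in Ω, ⟪gradient c x, gradient w x⟫ := by
        rw [integral_sub hdiv_int.integrableOn hinner_int, hdiv_Ω, hdiv_zero, zero_sub]

end Euclidean

theorem IsLaneEmdenSolution.integral_sq_div_rpow_eq {N : ℕ} {q : ℝ}
    {Ω : Set (EuclideanSpace ℝ (Fin N))} (hΩ : IsOpen Ω)
    {w : EuclideanSpace ℝ (Fin N) → ℝ} (hw : IsLaneEmdenSolution q Ω w)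
    {φ : EuclideanSpace ℝ (Fin N) → ℝ} (hφ : ContDiff ℝ 1 φ)
    (hφc : HasCompactSupport φ) (hφΩ : tsupport φ ⊆ Ω) :
    ∫ x in Ω, φ x ^ 2 / w x ^ (2 - q)
      = ∫ x in Ω, (2 * (φ x / w x * ⟪gradient φ x, gradient w x⟫)
          - (‖gradient w x‖ / w x) ^ 2 * φ x ^ 2) := by
  obtain ⟨hw2, hwpos, hweq⟩ := hw
  have hwne : ∀ x ∈ Ω, w x ≠ 0 := fun x hx => (hwpos x hx).ne'
  have hcΩ : tsupport (fun y => φ y ^ 2 / w y) ⊆ tsupport φ :=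
    closure_mono fun x hx hφx => hx (by simp [hφx])
  have hgreen := integral_mul_lap_eq_neg_integral_inner_gradient hΩ (c := fun y => φ y ^ 2 / w y)
    ((hφ.contDiffOn.pow 2).div (hw2.of_le one_le_two) hwne)
    (hφc.of_isClosed_subset (isClosed_tsupport _) hcΩ) (hcΩ.trans hφΩ) hw2
  calc ∫ x in Ω, φ x ^ 2 / w x ^ (2 - q) = -∫ x in Ω, φ x ^ 2 / w x * lap w x := by
        rw [← integral_neg]
        refine setIntegral_congr_fun hΩ.measurableSet fun x hx => ?_
        rw [← mul_neg, hweq x hx, div_mul_rpow_sub_one (hwpos x hx)]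
    _ = _ := by
        rw [hgreen, neg_neg]
        exact setIntegral_congr_fun hΩ.measurableSet fun x hx =>
          inner_gradient_sq_div (hφ.differentiable one_ne_zero x)
            ((hw2.differentiableOn two_ne_zero).differentiableAt (hΩ.mem_nhds hx)) (hwne x hx)

theorem hardy_lane_emden {N : ℕ} {q : ℝ}
    {Ω : Set (EuclideanSpace ℝ (Fin N))} (hΩ : IsOpen Ω)
    {w : EuclideanSpace ℝ (Fin N) → ℝ} (hw : IsLaneEmdenSolution q Ω w)
    {δ : ℝ}
    (φ : EuclideanSpace ℝ (Fin N) → ℝ) (hφ : ContDiff ℝ (⊤ : ℕ∞) φ)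
    (hφc : HasCompactSupport φ) (hφΩ : tsupport φ ⊆ Ω) :
    (1 / δ) * (1 - 1 / δ) * (∫ x in Ω, (‖gradient w x‖ / w x) ^ 2 * (φ x) ^ 2)
      + (1 / δ) * (∫ x in Ω, (φ x) ^ 2 / w x ^ (2 - q))
    ≤ ∫ x in Ω, ‖gradient φ x‖ ^ 2 := by
  have hφ1 : ContDiff ℝ 1 φ := hφ.of_le (by exact_mod_cast le_top)
  have hwne : ∀ x ∈ Ω, w x ≠ 0 := fun x hx => (hw.2.1 x hx).ne'
  have hwc := hw.1.continuousOn
  have hφc' := hφ1.continuous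
  have hgradw := hw.1.continuousOn_gradient hΩ one_le_two
  have hgradφ := hφ1.contDiffOn.continuousOn_gradient hΩ le_rfl
  have hint : ∀ {f : EuclideanSpace ℝ (Fin N) → ℝ}, ContinuousOn f Ω →
      (∀ x ∉ tsupport φ, f x = 0) → IntegrableOn f Ω := fun hf h =>
    hf.integrableOn_of_support_subset_isCompact hΩ.measurableSet hφc hφΩ (support_subset_iff'.2 h)
  have hA : IntegrableOn (fun x => (‖gradient w x‖ / w x) ^ 2 * φ x ^ 2) Ω :=
    hint (by fun_prop (disch := assumption)) fun x hx => by
      simp [image_eq_zero_of_notMem_tsupport hx]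
  have hB : IntegrableOn (fun x => φ x / w x * ⟪gradient φ x, gradient w x⟫) Ω :=
    hint (by fun_prop (disch := assumption)) fun x hx => by
      simp [image_eq_zero_of_notMem_tsupport hx]
  have hgradφ2 : IntegrableOn (fun x => ‖gradient φ x‖ ^ 2) Ω :=
    hint (by fun_prop) fun x hx => by simp [gradient, fderiv_of_notMem_tsupport ℝ hx]
  rw [hw.integral_sq_div_rpow_eq hΩ hφ1 hφc hφΩ, integral_sub (hB.const_mul 2) hA,
    integral_const_mul]
  calc _ = ∫ x in Ω, (2 * (1 / δ) * (φ x / w x * ⟪gradient φ x, gradient w x⟫)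
          - (1 / δ) ^ 2 * ((‖gradient w x‖ / w x) ^ 2 * φ x ^ 2)) := by
        rw [integral_sub (hB.const_mul _) (hA.const_mul _), integral_const_mul, integral_const_mul]
        ring
    _ ≤ ∫ x in Ω, ‖gradient φ x‖ ^ 2 :=
        setIntegral_mono_on (by exact (hB.const_mul _).sub (hA.const_mul _)) hgradφ2
          hΩ.measurableSet fun x _ => by
            linear_combination
              two_mul_mul_inner_sub_le_norm_sq (1 / δ * (φ x / w x)) (gradient φ x) (gradient w x)
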